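/- The Pareto front of the OneJumpZeroJump$_{n,k}$ problem (with $2 \leq k < n/2$) is exactly the set $\{(a, n+2k-a) \mid a \in [2k..n] \cup \{k, n+k\}\}$, which has cardinality $n - 2k + 3$. A solution $x$ is Pareto optimal if and only if $|x|_1 \in \{0\} \cup [k..n-k] \cup \{n\}$. -/
import Mathlib


def onesCount (n : ℕ) (x : Fin n → Bool) : ℕ :=
  (Finset.univ.filter fun i => x i = true).card

def zerosCount (n : ℕ) (x : Fin n → Bool) : ℕ :=
  (Finset.univ.filter fun i => x i = false).card

def ojzj1 (n k : ℕ) (x : Fin n → Bool) : ℕ :=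
  if onesCount n x ≤ n - k ∨ onesCount n x = n then k + onesCount n x else n - onesCount n x

def ojzj2 (n k : ℕ) (x : Fin n → Bool) : ℕ :=
  if zerosCount n x ≤ n - k ∨ zerosCount n x = n then k + zerosCount n x else n - zerosCount n x

/-- `y` strictly dominates `x`. -/
def dominates (n k : ℕ) (y x : Fin n → Bool) : Prop :=
  (ojzj1 n k x ≤ ojzj1 n k y ∧ ojzj2 n k x ≤ ojzj2 n k y) ∧
    (ojzj1 n k x < ojzj1 n k y ∨ ojzj2 n k x < ojzj2 n k y)

def paretoOptimal (n k : ℕ) (x : Fin n → Bool) : Prop :=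
  ¬ ∃ y, dominates n k y x

/-- The two objective values as a function of the number of ones. -/
def ojzjF1 (n k m : ℕ) : ℕ := if m ≤ n - k ∨ m = n then k + m else n - m

def ojzjF2 (n k m : ℕ) : ℕ :=
  if n - m ≤ n - k ∨ n - m = n then k + (n - m) else n - (n - m)

lemma ojzj_ones_add_zeros (n : ℕ) (x : Fin n → Bool) :
    onesCount n x + zerosCount n x = n := by
  classical
  unfold onesCount zerosCount
  have h := Finset.card_filter_add_card_filter_not
    (s := (Finset.univ : Finset (Fin n))) (p := fun i => x i = true)
  simpa [Bool.not_eq_true] using h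

lemma ojzj_ones_le (n : ℕ) (x : Fin n → Bool) : onesCount n x ≤ n := by
  have := ojzj_ones_add_zeros n x
  omega

lemma ojzj1_eq (n k : ℕ) (x : Fin n → Bool) :
    ojzj1 n k x = ojzjF1 n k (onesCount n x) := rfl

lemma ojzj2_eq (n k : ℕ) (x : Fin n → Bool) :
    ojzj2 n k x = ojzjF2 n k (onesCount n x) := by
  have hz : zerosCount n x = n - onesCount n x := by
    have := ojzj_ones_add_zeros n x; omega
  unfold ojzj2 ojzjF2
  rw [hz]

lemma ojzj_exists_ones (n t : ℕ) (ht : t ≤ n) :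
    ∃ x : Fin n → Bool, onesCount n x = t := by
  classical
  refine ⟨fun i => decide (i.val < t), ?_⟩
  unfold onesCount
  have hlt : ∀ m ∈ Finset.range t, m < n := fun m hm => by
    simp only [Finset.mem_range] at hm; omega
  have : (Finset.univ.filter fun i : Fin n => (decide (i.val < t)) = true) =
      Finset.attachFin (Finset.range t) hlt := by
    ext i
    simp [Finset.mem_attachFin]
  rw [this, Finset.card_attachFin, Finset.card_range]

theorem ojzj_pareto_front (n k : ℕ) (hk : 2 ≤ k) (hkn : 2 * k < n) :
    (∀ x : Fin n → Bool, paretoOptimal n k x ↔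
      (onesCount n x = 0 ∨ (k ≤ onesCount n x ∧ onesCount n x ≤ n - k) ∨
        onesCount n x = n)) ∧
    {p : ℕ × ℕ | ∃ x : Fin n → Bool, paretoOptimal n k x ∧ p = (ojzj1 n k x, ojzj2 n k x)} =
      {p : ℕ × ℕ | ∃ a : ℕ, (a = k ∨ (2 * k ≤ a ∧ a ≤ n) ∨ a = n + k) ∧
        p = (a, n + 2 * k - a)} ∧
    {p : ℕ × ℕ | ∃ a : ℕ, (a = k ∨ (2 * k ≤ a ∧ a ≤ n) ∨ a = n + k) ∧
        p = (a, n + 2 * k - a)}.ncard = n - 2 * k + 3 := by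
  have hval : ∀ m, m ≤ n → (m = 0 ∨ (k ≤ m ∧ m ≤ n - k) ∨ m = n) →
      ojzjF1 n k m + ojzjF2 n k m = n + 2 * k := by
    intro m hm h
    unfold ojzjF1 ojzjF2
    split_ifs <;> omega
  have hsum : ∀ m, m ≤ n → ojzjF1 n k m + ojzjF2 n k m ≤ n + 2 * k := by
    intro m hm
    unfold ojzjF1 ojzjF2
    split_ifs <;> omega
  have hpar : ∀ x : Fin n → Bool, paretoOptimal n k x ↔
      (onesCount n x = 0 ∨ (k ≤ onesCount n x ∧ onesCount n x ≤ n - k) ∨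
        onesCount n x = n) := by
    intro x
    constructor
    · intro hp
      by_contra hbad
      apply hp
      have hm := ojzj_ones_le n x
      push_neg at hbad
      obtain ⟨h0, hmid, hn⟩ := hbad
      rcases (by omega : onesCount n x < k ∨ n - k < onesCount n x) with hc | hc
      · obtain ⟨y, hy⟩ := ojzj_exists_ones n k (by omega)
        refine ⟨y, ?_⟩
        unfold dominates
        rw [ojzj1_eq, ojzj1_eq, ojzj2_eq, ojzj2_eq, hy]
        unfold ojzjF1 ojzjF2
        split_ifs <;> omega
      · obtain ⟨y, hy⟩ := ojzj_exists_ones n (n - k) (by omega)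
        refine ⟨y, ?_⟩
        unfold dominates
        rw [ojzj1_eq, ojzj1_eq, ojzj2_eq, ojzj2_eq, hy]
        unfold ojzjF1 ojzjF2
        split_ifs <;> omega
    · intro hgood hdom
      obtain ⟨y, hy⟩ := hdom
      have h1 := hval _ (ojzj_ones_le n x) hgood
      have h2 := hsum _ (ojzj_ones_le n y)
      unfold dominates at hy
      rw [ojzj1_eq n k x, ojzj2_eq n k x, ojzj1_eq n k y, ojzj2_eq n k y] at hy
      omega
  refine ⟨hpar, ?_, ?_⟩
  · ext p
    simp only [Set.mem_setOf_eq]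
    constructor
    · rintro ⟨x, hx, rfl⟩
      rw [hpar] at hx
      have hmn := ojzj_ones_le n x
      have hs := hval _ hmn hx
      refine ⟨ojzjF1 n k (onesCount n x), ?_, ?_⟩
      · unfold ojzjF1
        split_ifs <;> omega
      · rw [ojzj1_eq, ojzj2_eq, Prod.mk.injEq]
        exact ⟨rfl, by omega⟩
    · rintro ⟨a, ha, rfl⟩
      obtain ⟨x, hx⟩ := ojzj_exists_ones n (a - k) (by omega)
      have hgood : onesCount n x = 0 ∨ (k ≤ onesCount n x ∧ onesCount n x ≤ n - k) ∨
          onesCount n x = n := by rw [hx]; omega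
      refine ⟨x, (hpar x).mpr hgood, ?_⟩
      have hs := hval _ (ojzj_ones_le n x) hgood
      rw [hx] at hs
      have h1 : ojzjF1 n k (a - k) = a := by
        unfold ojzjF1
        split_ifs <;> omega
      have h2 : ojzjF2 n k (a - k) = n + 2 * k - a := by omega
      rw [ojzj1_eq, ojzj2_eq, hx, h1, h2]
  · have him : {p : ℕ × ℕ | ∃ a : ℕ, (a = k ∨ (2 * k ≤ a ∧ a ≤ n) ∨ a = n + k) ∧
        p = (a, n + 2 * k - a)} =
        (fun a => (a, n + 2 * k - a)) ''
          ↑(insert k (insert (n + k) (Finset.Icc (2 * k) n))) := by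
      ext p
      simp only [Set.mem_setOf_eq, Set.mem_image, Finset.coe_insert, Set.mem_insert_iff,
        Finset.mem_coe, Finset.mem_Icc]
      constructor
      · rintro ⟨a, ha, rfl⟩
        exact ⟨a, by tauto, rfl⟩
      · rintro ⟨a, ha, rfl⟩
        exact ⟨a, by tauto, rfl⟩
    rw [him, Set.ncard_image_of_injective _
      (fun a b h => by simpa using congrArg Prod.fst h),
      Set.ncard_coe_finset,
      Finset.card_insert_of_notMem (by simp [Finset.mem_Icc]; omega),
      Finset.card_insert_of_notMem (by simp [Finset.mem_Icc]; omega),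
      Nat.card_Icc]
    omega
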